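/- arXiv:1608.01035 — 3 statements merged into one kernel-verified Lean document; each statement's English description precedes it below -/
import Mathlib

section
/- Let X be a Banach space and L : X → X a bounded linear operator such that λ I + L is invertible for some scalar λ ≠ 0. Let P : X → X be a bounded linear projection. If ‖(I − P)L‖ · ‖(λ I + L)⁻¹‖ ≤ δ/(1+δ) for some δ > 0, then λ I + P L is invertible and ‖(λ I + P L)⁻¹‖ ≤ (1 + δ) ‖(λ I + L)⁻¹‖. -/
/-!
Write `A = λI + L` and `E = (I - P)L`, so that `λI + PL = A - E = A (I - A⁻¹E)`. The hypothesis
makes `‖A⁻¹E‖ ≤ δ/(1+δ) < 1`, so `I - A⁻¹E` is inverted by its Neumann series, whose norm is at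
most `(1 - δ/(1+δ))⁻¹ = 1 + δ`.
-/

open ContinuousLinearMap

theorem inv_one_sub_le_one_add_of_le_div {x δ : ℝ} (hδ : 0 < δ) (hx : x ≤ δ / (1 + δ)) :
    x < 1 ∧ (1 - x)⁻¹ ≤ 1 + δ := by
  have hδ₁ : 0 < 1 + δ := by linarith
  have hx' : x * (1 + δ) ≤ δ := (le_div_iff₀ hδ₁).mp hx
  have hx₁ : x < 1 := by nlinarith
  refine ⟨hx₁, (inv_le_comm₀ (by linarith) hδ₁).mpr ?_⟩
  rw [inv_le_iff_one_le_mul₀ hδ₁]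
  nlinarith

section NormedRing

variable {R : Type*} [NormedRing R] [HasSummableGeomSeries R]

theorem Units.norm_inv_oneSub_le (h1 : ‖(1 : R)‖ ≤ 1) (t : R) (ht : ‖t‖ < 1) :
    ‖(↑(Units.oneSub t ht)⁻¹ : R)‖ ≤ (1 - ‖t‖)⁻¹ :=
  (tsum_geometric_le_of_norm_lt_one t ht).trans (by linarith)

theorem Units.exists_sub_inv_norm_le (h1 : ‖(1 : R)‖ ≤ 1) (u : Rˣ) (e : R) {δ : ℝ}
    (hδ : 0 < δ) (he : ‖e‖ * ‖(↑u⁻¹ : R)‖ ≤ δ / (1 + δ)) :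
    ∃ v : Rˣ, (v : R) = u - e ∧ ‖(↑v⁻¹ : R)‖ ≤ (1 + δ) * ‖(↑u⁻¹ : R)‖ := by
  set t : R := ↑u⁻¹ * e
  have ht : ‖t‖ ≤ δ / (1 + δ) := (norm_mul_le _ _).trans (mul_comm ‖e‖ _ ▸ he)
  obtain ⟨ht₁, ht_inv⟩ := inv_one_sub_le_one_add_of_le_div hδ ht
  refine ⟨u * Units.oneSub t ht₁, by simp [t, mul_sub, ← mul_assoc], ?_⟩
  calc ‖(↑(u * Units.oneSub t ht₁)⁻¹ : R)‖
      = ‖(↑(Units.oneSub t ht₁)⁻¹ : R) * ↑u⁻¹‖ := by rw [mul_inv_rev, Units.val_mul]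
    _ ≤ (1 - ‖t‖)⁻¹ * ‖(↑u⁻¹ : R)‖ :=
        (norm_mul_le _ _).trans (by gcongr; exact Units.norm_inv_oneSub_le h1 t ht₁)
    _ ≤ (1 + δ) * ‖(↑u⁻¹ : R)‖ := by gcongr

end NormedRing

theorem projection_perturbation_invertible_general
    {X : Type*} [NormedAddCommGroup X] [NormedSpace ℂ X] [CompleteSpace X]
    (L P B : X →L[ℂ] X) (l : ℂ) (δ : ℝ)
    (hδ : 0 < δ)
    (hB1 : (l • (1 : X →L[ℂ] X) + L) ∘L B = 1)
    (hB2 : B ∘L (l • (1 : X →L[ℂ] X) + L) = 1)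
    (hsmall : ‖((1 : X →L[ℂ] X) - P) ∘L L‖ * ‖B‖ ≤ δ / (1 + δ)) :
    ∃ C : X →L[ℂ] X,
      (l • (1 : X →L[ℂ] X) + P ∘L L) ∘L C = 1 ∧
      C ∘L (l • (1 : X →L[ℂ] X) + P ∘L L) = 1 ∧
      ‖C‖ ≤ (1 + δ) * ‖B‖ := by
  let A : (X →L[ℂ] X)ˣ := ⟨l • 1 + L, B, hB1, hB2⟩
  obtain ⟨v, hv, hv_norm⟩ := A.exists_sub_inv_norm_le norm_id_le _ hδ hsmall
  have hv' : (v : X →L[ℂ] X) = l • 1 + P ∘L L := by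
    rw [hv, sub_comp, ← mul_def, one_mul]
    change l • 1 + L - (L - P ∘L L) = _
    abel
  exact ⟨↑v⁻¹, hv' ▸ v.mul_inv, hv' ▸ v.inv_mul, hv_norm⟩

/-- Key invertibility step of Lemma 4.2: if `‖(I-P)L‖·‖(λI+L)⁻¹‖ ≤ δ/(1+δ)` then
`λI + PL` is invertible with `‖(λI+PL)⁻¹‖ ≤ (1+δ)‖(λI+L)⁻¹‖`. -/
theorem projection_perturbation_invertible
    {X : Type*} [NormedAddCommGroup X] [NormedSpace ℂ X] [CompleteSpace X]
    (L P B : X →L[ℂ] X) (l : ℂ) (δ : ℝ)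
    (hl : l ≠ 0) (hδ : 0 < δ)
    (hP : P ∘L P = P)
    (hB1 : (l • (1 : X →L[ℂ] X) + L) ∘L B = 1)
    (hB2 : B ∘L (l • (1 : X →L[ℂ] X) + L) = 1)
    (hsmall : ‖((1 : X →L[ℂ] X) - P) ∘L L‖ * ‖B‖ ≤ δ / (1 + δ)) :
    ∃ C : X →L[ℂ] X,
      (l • (1 : X →L[ℂ] X) + P ∘L L) ∘L C = 1 ∧
      C ∘L (l • (1 : X →L[ℂ] X) + P ∘L L) = 1 ∧
      ‖C‖ ≤ (1 + δ) * ‖B‖ :=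
  projection_perturbation_invertible_general L P B l δ hδ hB1 hB2 hsmall
end

section
/- Let X be a Banach space, λ ≠ 0, and L : X → X bounded with λ I + L invertible. Let P be a bounded projection and suppose ‖(I − P)L‖ · ‖(λ I + L)⁻¹‖ ≤ δ/(1+δ) for some δ > 0. If v solves (λ I + L)v = f and v_P solves (λ I + P L)v_P = P f, then ‖v − v_P‖ ≤ |λ| (1 + δ) ‖(λ I + L)⁻¹‖ · ‖(I − P)v‖. -/
/-!
Let `B` be a left inverse of `A = λ I + L`, `e = v - v_P` and `y = A e`. As `P L = L - (I - P) L B A`,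
the Galerkin equations give `y - T y = λ (I - P) v` with `T = (I - P) L B`, and
`‖T‖ ≤ δ / (1 + δ)` turns this into `‖y‖ ≤ (1 + δ) |λ| ‖(I - P) v‖`; finally `e = B y`.
-/

open ContinuousLinearMap

section

variable {𝕜 E : Type*} [NontriviallyNormedField 𝕜] [NormedAddCommGroup E] [NormedSpace 𝕜 E]

theorem norm_le_one_add_mul_norm_of_sub_apply_eq {T : E →L[𝕜] E} {δ : ℝ} (hδ : 0 ≤ δ)
    (hT : ‖T‖ ≤ δ / (1 + δ)) {y z : E} (h : y - T y = z) : ‖y‖ ≤ (1 + δ) * ‖z‖ := by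
  have hδ1 : 0 < 1 + δ := by linarith
  have hTy : ‖T y‖ ≤ δ / (1 + δ) * ‖y‖ :=
    (le_opNorm T y).trans (mul_le_mul_of_nonneg_right hT (norm_nonneg y))
  have hy : ‖y‖ ≤ ‖z‖ + δ / (1 + δ) * ‖y‖ := by
    calc ‖y‖ = ‖z + T y‖ := by rw [← h, sub_add_cancel]
      _ ≤ ‖z‖ + ‖T y‖ := norm_add_le _ _
      _ ≤ ‖z‖ + δ / (1 + δ) * ‖y‖ := by gcongr
  have key : (1 + δ) * ‖y‖ ≤ (1 + δ) * ‖z‖ + δ * ‖y‖ := by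
    have := mul_le_mul_of_nonneg_left hy hδ1.le
    rwa [mul_add, ← mul_assoc, mul_div_cancel₀ _ hδ1.ne'] at this
  linarith

theorem galerkin_error_eq {L P : E →L[𝕜] E} {l : 𝕜} {f v vP : E}
    (hv : (l • (1 : E →L[𝕜] E) + L) v = f)
    (hvP : (l • (1 : E →L[𝕜] E) + P ∘L L) vP = P f) :
    (l • (1 : E →L[𝕜] E) + P ∘L L) (v - vP) = l • ((1 : E →L[𝕜] E) - P) v := by
  rw [map_sub, hvP, ← hv]
  simp only [add_apply, smul_apply, comp_apply, sub_apply, map_add, map_smul, smul_sub]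
  abel

theorem smul_one_add_comp_eq_sub_comp {L P B : E →L[𝕜] E} {l : 𝕜}
    (hB : B ∘L (l • (1 : E →L[𝕜] E) + L) = 1) :
    l • (1 : E →L[𝕜] E) + P ∘L L =
      (1 - ((1 : E →L[𝕜] E) - P) ∘L L ∘L B) ∘L (l • (1 : E →L[𝕜] E) + L) := by
  rw [sub_comp, comp_assoc, comp_assoc, hB]
  ext x
  simp only [add_apply, sub_apply, smul_apply, comp_apply, one_apply_eq_self, map_add, map_smul]
  abel

end

theorem galerkin_quasioptimal_general
    {X : Type*} [NormedAddCommGroup X] [NormedSpace ℂ X]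
    (L P B : X →L[ℂ] X) (l : ℂ) (δ : ℝ)
    (hδ : 0 < δ)
    (hB2 : B ∘L (l • (1 : X →L[ℂ] X) + L) = 1)
    (hsmall : ‖((1 : X →L[ℂ] X) - P) ∘L L‖ * ‖B‖ ≤ δ / (1 + δ))
    (f v vP : X)
    (hv : (l • (1 : X →L[ℂ] X) + L) v = f)
    (hvP : (l • (1 : X →L[ℂ] X) + P ∘L L) vP = P f) :
    ‖v - vP‖ ≤ ‖l‖ * (1 + δ) * ‖B‖ * ‖((1 : X →L[ℂ] X) - P) v‖ := by
  set A : X →L[ℂ] X := l • (1 : X →L[ℂ] X) + L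
  have hT : ‖((1 : X →L[ℂ] X) - P) ∘L L ∘L B‖ ≤ δ / (1 + δ) := by
    rw [← comp_assoc]; exact (opNorm_comp_le _ _).trans hsmall
  have hy : A (v - vP) - (((1 : X →L[ℂ] X) - P) ∘L L ∘L B) (A (v - vP)) =
      l • ((1 : X →L[ℂ] X) - P) v := by
    rw [← galerkin_error_eq hv hvP, smul_one_add_comp_eq_sub_comp hB2]
    rfl
  have he : B (A (v - vP)) = v - vP := by rw [← comp_apply, hB2]; rfl
  calc ‖v - vP‖ = ‖B (A (v - vP))‖ := by rw [he]
    _ ≤ ‖B‖ * ‖A (v - vP)‖ := le_opNorm B _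
    _ ≤ ‖B‖ * ((1 + δ) * ‖l • ((1 : X →L[ℂ] X) - P) v‖) := by
      gcongr; exact norm_le_one_add_mul_norm_of_sub_apply_eq hδ.le hT hy
    _ = ‖l‖ * (1 + δ) * ‖B‖ * ‖((1 : X →L[ℂ] X) - P) v‖ := by rw [norm_smul]; ring

/-- Lemma 4.2 (quasi-optimality of the Galerkin/projection method):
if `‖(I-P)L‖·‖(λI+L)⁻¹‖ ≤ δ/(1+δ)`, `(λI+L)v = f` and `(λI+PL)v_P = Pf`, then
`‖v - v_P‖ ≤ |λ|(1+δ)‖(λI+L)⁻¹‖·‖(I-P)v‖`. -/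
theorem galerkin_quasioptimal
    {X : Type*} [NormedAddCommGroup X] [NormedSpace ℂ X] [CompleteSpace X]
    (L P B : X →L[ℂ] X) (l : ℂ) (δ : ℝ)
    (hl : l ≠ 0) (hδ : 0 < δ)
    (hP : P ∘L P = P)
    (hB1 : (l • (1 : X →L[ℂ] X) + L) ∘L B = 1)
    (hB2 : B ∘L (l • (1 : X →L[ℂ] X) + L) = 1)
    (hsmall : ‖((1 : X →L[ℂ] X) - P) ∘L L‖ * ‖B‖ ≤ δ / (1 + δ))
    (f v vP : X)
    (hv : (l • (1 : X →L[ℂ] X) + L) v = f)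
    (hvP : (l • (1 : X →L[ℂ] X) + P ∘L L) vP = P f) :
    ‖v - vP‖ ≤ ‖l‖ * (1 + δ) * ‖B‖ * ‖((1 : X →L[ℂ] X) - P) v‖ :=
  galerkin_quasioptimal_general L P B l δ hδ hB2 hsmall f v vP hv hvP
end

section
/- There exist constants C₂ > 0 and δ₁ > 0 such that for all 0 < δ ≤ δ₁ and all natural numbers m, setting β = π/2 − δ and γ_β = 2 sin(β/(4 − 2β/π)), one has γ_β^m ≤ exp(−m δ / C₂). Consequently, given ε ∈ (0,1), if m ≥ (C₂/δ) log(1/ε) then γ_β^m ≤ ε. -/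
/-!
With `β = π/2 - δ` the denominator `4 - 2β/π = 3 + 2δ/π` is at least `3`, so the argument of the
sine is at most `π/6 - δ/3`. Expanding `sin (π/6 - t)` and using Jordan's inequality
`sin t ≥ 2t/π` gives `2 sin (π/6 - t) ≤ 1 - (2√3/π) t ≤ 1 - t`, whence `γ_β ≤ exp (-δ/3)`
and one may take `C₂ = 3`, `δ₁ = π/2`.
-/

open Real

noncomputable def gmresFactor (β : ℝ) : ℝ := 2 * sin (β / (4 - 2 * β / π))

lemma two_mul_sin_pi_div_six_sub_le {t : ℝ} (ht₀ : 0 ≤ t) (ht₁ : t ≤ π / 2) :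
    2 * sin (π / 6 - t) ≤ 1 - t := by
  have hjordan : 2 / π * t ≤ sin t := mul_le_sin ht₀ ht₁
  have hsqrt3 : (1.7 : ℝ) ≤ √3 := by
    rw [le_sqrt (by norm_num) (by norm_num)]; norm_num
  have hπ : π ≤ 2 * 1.7 := by linarith [pi_lt_d2]
  have hslope : t ≤ √3 * sin t :=
    calc t ≤ 2 * 1.7 / π * t := by
          rw [div_mul_eq_mul_div, le_div_iff₀ pi_pos]; nlinarith
      _ ≤ √3 * (2 / π * t) := by
          rw [← mul_assoc, mul_div_assoc', mul_comm √3 2]; gcongr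
      _ ≤ √3 * sin t := by gcongr
  rw [sin_sub, sin_pi_div_six, cos_pi_div_six]
  nlinarith [cos_le_one t]

lemma gmresFactor_arg_mem {δ : ℝ} (hδ₀ : 0 ≤ δ) (hδ₁ : δ ≤ π / 2) :
    0 ≤ (π / 2 - δ) / (4 - 2 * (π / 2 - δ) / π) ∧
      (π / 2 - δ) / (4 - 2 * (π / 2 - δ) / π) ≤ π / 6 - δ / 3 := by
  have hden : 4 - 2 * (π / 2 - δ) / π = 3 + 2 * δ / π := by
    field_simp [pi_ne_zero]; ring
  have hnum : 0 ≤ π / 2 - δ := by linarith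
  have hshift : 0 ≤ 2 * δ / π := by positivity
  rw [hden]
  refine ⟨by positivity, ?_⟩
  calc (π / 2 - δ) / (3 + 2 * δ / π) ≤ (π / 2 - δ) / 3 :=
        div_le_div_of_nonneg_left hnum (by norm_num) (by linarith)
    _ = π / 6 - δ / 3 := by ring

lemma gmresFactor_nonneg_and_le_exp {δ : ℝ} (hδ₀ : 0 ≤ δ) (hδ₁ : δ ≤ π / 2) :
    0 ≤ gmresFactor (π / 2 - δ) ∧ gmresFactor (π / 2 - δ) ≤ exp (-δ / 3) := by
  obtain ⟨harg₀, harg₁⟩ := gmresFactor_arg_mem hδ₀ hδ₁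
  have hπ := pi_pos
  refine ⟨mul_nonneg zero_le_two (sin_nonneg_of_nonneg_of_le_pi harg₀ (by linarith)), ?_⟩
  calc gmresFactor (π / 2 - δ) ≤ 2 * sin (π / 6 - δ / 3) := by
        unfold gmresFactor
        gcongr
        exact sin_le_sin_of_le_of_le_pi_div_two (by linarith) (by linarith) harg₁
    _ ≤ 1 - δ / 3 := two_mul_sin_pi_div_six_sub_le (by positivity) (by linarith)
    _ ≤ exp (-δ / 3) := by linarith [add_one_le_exp (-δ / 3)]

lemma pow_le_exp_of_le_exp {γ c : ℝ} (hγ₀ : 0 ≤ γ) (hγ : γ ≤ exp (-c)) (m : ℕ) :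
    γ ^ m ≤ exp (-m * c) :=
  calc γ ^ m ≤ exp (-c) ^ m := pow_le_pow_left₀ hγ₀ hγ m
    _ = exp (-m * c) := by rw [← exp_nat_mul]; ring_nf

lemma exp_neg_mul_div_le_of_log_le {C δ ε m : ℝ} (hC : 0 < C) (hδ : 0 < δ) (hε : 0 < ε)
    (hm : C / δ * log (1 / ε) ≤ m) : exp (-m * δ / C) ≤ ε := by
  rw [one_div, log_inv, div_mul_eq_mul_div, div_le_iff₀ hδ] at hm
  rw [← exp_log hε, exp_le_exp, neg_mul, neg_div, neg_le, le_div_iff₀ hC]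
  linarith

/-- Quantitative GMRES iteration bound: there are `C₂, δ₁ > 0` such that for
`0 < δ ≤ δ₁` and `β = π/2 - δ`, the factor `γ_β = 2 sin(β/(4 - 2β/π))`
satisfies `γ_β^m ≤ exp(-mδ/C₂)`; consequently `m ≥ (C₂/δ) log(1/ε)` forces
`γ_β^m ≤ ε` for any `ε ∈ (0,1)`. -/
theorem gamma_beta_iteration_bound :
    ∃ C₂ > (0 : ℝ), ∃ δ₁ > (0 : ℝ), ∀ δ : ℝ, 0 < δ → δ ≤ δ₁ →
      (∀ m : ℕ,
        (2 * Real.sin ((π / 2 - δ) / (4 - 2 * (π / 2 - δ) / π))) ^ m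
          ≤ Real.exp (-(m : ℝ) * δ / C₂)) ∧
      (∀ ε : ℝ, 0 < ε → ε < 1 → ∀ m : ℕ,
        (C₂ / δ) * Real.log (1 / ε) ≤ (m : ℝ) →
        (2 * Real.sin ((π / 2 - δ) / (4 - 2 * (π / 2 - δ) / π))) ^ m ≤ ε) := by
  refine ⟨3, by norm_num, π / 2, by positivity, fun δ hδ₀ hδ₁ => ?_⟩
  obtain ⟨hγ₀, hγ⟩ := gmresFactor_nonneg_and_le_exp hδ₀.le hδ₁
  have hpow (m : ℕ) : gmresFactor (π / 2 - δ) ^ m ≤ exp (-(m : ℝ) * δ / 3) := by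
    rw [mul_div_assoc]
    exact pow_le_exp_of_le_exp hγ₀ (by rwa [neg_div] at hγ) m
  exact ⟨hpow, fun ε hε _ m hm =>
    (hpow m).trans (exp_neg_mul_div_le_of_log_le (by norm_num) hδ₀ hε hm)⟩
end
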